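/- Let φ : ℤ_p → ℂ_p be continuous. The map ℤ_p → C(ℤ_p, ℂ_p), y ↦ S^y(φ), is continuous with respect to the sup-norm on C(ℤ_p, ℂ_p). -/

import Mathlib

open Finset

/-- `(x choose k)` on `ℤ_p`, valued in a normed `ℚ_p`-algebra `K` (modelling `ℂ_p`). -/
noncomputable def padicBinom (p : ℕ) [Fact p.Prime] (K : Type*) [NormedField K]
    [NormedAlgebra ℚ_[p] K] (x : ℤ_[p]) (k : ℕ) : K :=
  algebraMap ℚ_[p] K ((∏ i ∈ Finset.range k, ((x : ℚ_[p]) - (i : ℚ_[p]))) / (k.factorial : ℚ_[p]))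

/-- The operator `S^y`, `S^y(φ)(x) = ∑_{k≥0} (-1)^k k! (y choose k)(x choose k) φ(x-k)`. -/
noncomputable def Sop (p : ℕ) [Fact p.Prime] {K : Type*} [NormedField K]
    [NormedAlgebra ℚ_[p] K] (y : ℤ_[p]) (φ : ℤ_[p] → K) : ℤ_[p] → K :=
  fun x => ∑' k : ℕ,
    (-1 : K) ^ k * (k.factorial : K) * padicBinom p K y k * padicBinom p K x k * φ (x - (k : ℤ_[p]))

/-!
The binomial coefficients `(x choose k)` are `p`-adic integers, so the `k`-th term of `S^y(φ)`,
viewed as a continuous function of `(y, x)`, has sup-norm at most `‖k!‖ ‖φ‖`, and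
`‖k!‖ ≤ p⁻ⁿ` once `k ≥ pⁿ`. The terms thus tend to `0` in the complete ultrametric space
`C(ℤ_p, C(ℤ_p, K))`, where this suffices for summability; the sum is the required map `y ↦ S^y(φ)`.
-/

open Filter Topology

namespace Padic

variable {p : ℕ} [Fact p.Prime]

theorem norm_factorial_le_of_pow_le {n k : ℕ} (h : p ^ n ≤ k) :
    ‖(k.factorial : ℚ_[p])‖ ≤ (p : ℝ) ^ (-n : ℤ) := by
  have hdvd : p ^ n ∣ k.factorial := Nat.dvd_factorial (pow_pos (Fact.out : p.Prime).pos n) h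
  simpa using (norm_int_le_pow_iff_dvd (p := p) k.factorial n).2 (mod_cast hdvd)

theorem tendsto_factorial_nhds_zero :
    Tendsto (fun k : ℕ => (k.factorial : ℚ_[p])) atTop (𝓝 0) := by
  have hp : 1 < (p : ℝ) := mod_cast (Fact.out : p.Prime).one_lt
  refine NormedAddGroup.tendsto_nhds_zero.2 fun ε hε => ?_
  obtain ⟨n, hn⟩ := exists_pow_lt_of_lt_one hε (inv_lt_one_of_one_lt₀ hp)
  filter_upwards [eventually_ge_atTop (p ^ n)] with k hk
  calc ‖(k.factorial : ℚ_[p])‖ ≤ (p : ℝ) ^ (-n : ℤ) := norm_factorial_le_of_pow_le hk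
    _ = (p : ℝ)⁻¹ ^ n := by simp
    _ < ε := hn

end Padic

namespace PadicInt

variable {p : ℕ} [Fact p.Prime]

theorem coe_choose (x : ℤ_[p]) (k : ℕ) :
    ((Ring.choose x k : ℤ_[p]) : ℚ_[p]) =
      (∏ i ∈ Finset.range k, ((x : ℚ_[p]) - i)) / k.factorial := by
  -- `rw` does not see the coercion `ℤ_[p] → ℚ_[p]` as `Coe.ringHom`, hence the `change`s.
  change Coe.ringHom (Ring.choose x k) = _
  rw [Ring.map_choose]
  change Ring.choose (x : ℚ_[p]) k = _
  rw [Ring.choose_eq_smul, smul_eq_mul, ← Polynomial.aeval_eq_smeval, Polynomial.aeval_def,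
    ← Polynomial.eval_map, descPochhammer_map, descPochhammer_eval_eq_prod_range, inv_mul_eq_div]

end PadicInt

section padicBinom

variable (p : ℕ) [Fact p.Prime] {K : Type*} [NormedField K] [NormedAlgebra ℚ_[p] K]

theorem padicBinom_eq_choose (x : ℤ_[p]) (k : ℕ) :
    padicBinom p K x k = algebraMap ℚ_[p] K (Ring.choose x k : ℤ_[p]) := by
  rw [padicBinom, PadicInt.coe_choose]

theorem norm_padicBinom_le_one (x : ℤ_[p]) (k : ℕ) : ‖padicBinom p K x k‖ ≤ 1 := by
  rw [padicBinom_eq_choose, norm_algebraMap', ← PadicInt.norm_def]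
  exact PadicInt.norm_le_one _

@[fun_prop]
theorem continuous_padicBinom (k : ℕ) : Continuous fun x : ℤ_[p] => padicBinom p K x k := by
  simp only [padicBinom_eq_choose]
  exact (continuous_algebraMap ℚ_[p] K).comp
    (continuous_subtype_val.comp (PadicInt.continuous_choose k))

noncomputable def sopTerm (φ : C(ℤ_[p], K)) (k : ℕ) : C(ℤ_[p], C(ℤ_[p], K)) :=
  ContinuousMap.curry
    ⟨fun q => (-1 : K) ^ k * (k.factorial : K) * padicBinom p K q.1 k * padicBinom p K q.2 k *
      φ (q.2 - (k : ℤ_[p])), by fun_prop⟩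

theorem sopTerm_apply (φ : C(ℤ_[p], K)) (k : ℕ) (y x : ℤ_[p]) :
    sopTerm p φ k y x = (-1 : K) ^ k * (k.factorial : K) * padicBinom p K y k *
      padicBinom p K x k * φ (x - (k : ℤ_[p])) :=
  rfl

theorem norm_sopTerm_le (φ : C(ℤ_[p], K)) (k : ℕ) :
    ‖sopTerm p φ k‖ ≤ ‖(k.factorial : ℚ_[p])‖ * ‖φ‖ := by
  have h0 : 0 ≤ ‖(k.factorial : ℚ_[p])‖ * ‖φ‖ := by positivity
  refine (ContinuousMap.norm_le _ h0).2 fun y => (ContinuousMap.norm_le _ h0).2 fun x => ?_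
  have hfac : ‖(k.factorial : K)‖ = ‖(k.factorial : ℚ_[p])‖ := by
    rw [← map_natCast (algebraMap ℚ_[p] K), norm_algebraMap']
  rw [sopTerm_apply, norm_mul, norm_mul, norm_mul, norm_mul, norm_pow, norm_neg, norm_one,
    one_pow, one_mul, hfac]
  calc ‖(k.factorial : ℚ_[p])‖ * ‖padicBinom p K y k‖ * ‖padicBinom p K x k‖ *
        ‖φ (x - (k : ℤ_[p]))‖
      ≤ ‖(k.factorial : ℚ_[p])‖ * 1 * 1 * ‖φ‖ := by
        gcongr
        · exact norm_padicBinom_le_one p y k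
        · exact norm_padicBinom_le_one p x k
        · exact φ.norm_coe_le_norm _
    _ = ‖(k.factorial : ℚ_[p])‖ * ‖φ‖ := by ring

theorem summable_sopTerm [IsUltrametricDist K] [CompleteSpace K] (φ : C(ℤ_[p], K)) :
    Summable (sopTerm p φ) := by
  refine NonarchimedeanAddGroup.summable_of_tendsto_cofinite_zero ?_
  rw [Nat.cofinite_eq_atTop]
  refine squeeze_zero_norm (norm_sopTerm_le p φ) ?_
  simpa using (Padic.tendsto_factorial_nhds_zero (p := p)).norm.mul_const ‖φ‖

theorem tsum_sopTerm_apply [IsUltrametricDist K] [CompleteSpace K] (φ : C(ℤ_[p], K))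
    (y x : ℤ_[p]) : (∑' k, sopTerm p φ k) y x = Sop p y φ x := by
  have hs := summable_sopTerm p φ
  have hsy : Summable fun k => sopTerm p φ k y :=
    hs.map (ContinuousMap.evalCLM K y) (ContinuousMap.evalCLM K y).continuous
  rw [← ContinuousMap.tsum_apply hs, ← ContinuousMap.tsum_apply hsy]
  rfl

end padicBinom

/-- For continuous `φ : ℤ_p → ℂ_p`, the map `y ↦ S^y(φ)` is a continuous map
`ℤ_p → C(ℤ_p, ℂ_p)` for the sup-norm topology. -/
theorem continuous_Sop_in_exponent (p : ℕ) [Fact p.Prime] (K : Type*) [NontriviallyNormedField K]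
    [NormedAlgebra ℚ_[p] K] [IsUltrametricDist K] [CompleteSpace K]
    (φ : ℤ_[p] → K) (hφ : Continuous φ) :
    ∃ F : ℤ_[p] → C(ℤ_[p], K),
      (∀ y x : ℤ_[p], F y x = Sop p y φ x) ∧ Continuous F :=
  ⟨(∑' k, sopTerm p ⟨φ, hφ⟩ k : C(ℤ_[p], C(ℤ_[p], K))), tsum_sopTerm_apply p ⟨φ, hφ⟩,
    ContinuousMap.continuous _⟩
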